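/- arXiv:2412.18539 — 2 statements merged into one kernel-verified Lean document; each statement's English description precedes it below -/
import Mathlib

section
/- (Donsker–Varadhan variational formula) For any probability measure π on Θ and any measurable function h with ∫ e^h dπ < ∞, one has log ∫ e^h dπ = sup over probability measures ρ of [∫ h dρ − KL(ρ‖π)], with the convention ∞ − ∞ = ∞. Moreover, when h is bounded above on the support of π, the supremum is attained at the Gibbs measure π_h(dθ) = e^{h(θ)} π(dθ) / ∫ e^h dπ. -/
/-!
For the tilted measure `π_g = e^g π / Z_g` one has `log (dπ_g/dπ) = g - log Z_g`, so for any
admissible `ρ`, Gibbs' inequality `KL(ρ‖π_h) ≥ 0` unfolds to `∫ h dρ - KL(ρ‖π) ≤ log Z_h`, while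
`ρ = π_g` gives the value `log Z_g + ∫ (h - g) dπ_g`. When `h` is bounded above, `g = h` attains
`log Z_h`. In general `KL(π_h‖π)` may be infinite, so one uses the truncations `g = min h n`, whose
values are at least `log Z_{min h n} → log Z_h` (dominated convergence).
-/

open MeasureTheory

/-- Kullback-Leibler divergence between measures, `KL(ρ‖π) = ∫ log(dρ/dπ) dρ`
(meaningful when `ρ ≪ π` and the log-likelihood ratio is `ρ`-integrable). -/
noncomputable def klM {Θ : Type*} [MeasurableSpace Θ] (ρ π : Measure Θ) : ℝ :=
  ∫ θ, MeasureTheory.llr ρ π θ ∂ρ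

open Real (exp log exp_pos exp_le_exp add_one_le_exp mul_exp_neg_le_exp_neg_one
  aemeasurable_of_aemeasurable_exp)

lemma abs_exp_mul_le_of_le {t C : ℝ} (htC : t ≤ C) :
    |exp t * t| ≤ exp (-1) + exp C * |C| := by
  rcases le_or_gt 0 t with ht | ht
  · have hC : 0 ≤ C := ht.trans htC
    rw [abs_of_nonneg (by positivity), abs_of_nonneg hC]
    have : exp t * t ≤ exp C * C :=
      mul_le_mul (exp_le_exp.2 htC) htC ht (exp_pos C).le
    linarith [exp_pos (-1)]
  · rw [abs_of_neg (mul_neg_of_pos_of_neg (exp_pos t) ht)]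
    have := mul_exp_neg_le_exp_neg_one (-t)
    rw [neg_neg] at this
    nlinarith [exp_pos C, abs_nonneg C]

lemma abs_exp_min_mul_le {n : ℝ} (hn : 0 ≤ n) (t : ℝ) :
    |exp (min t n) * t| ≤ exp (-1) + exp n * n + exp n * exp t := by
  rcases le_or_gt t n with htn | htn
  · rw [min_eq_left htn]
    have := abs_exp_mul_le_of_le htn
    rw [abs_of_nonneg hn] at this
    linarith [mul_pos (exp_pos n) (exp_pos t)]
  · rw [min_eq_right htn.le, abs_of_pos (by nlinarith [exp_pos n])]
    have : exp n * t ≤ exp n * exp t :=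
      mul_le_mul_of_nonneg_left (by linarith [add_one_le_exp t]) (exp_pos n).le
    nlinarith [exp_pos (-1), exp_pos n]

section Integrability

variable {α : Type*} [MeasurableSpace α] {μ : Measure α} {g h : α → ℝ}

lemma integrable_exp_mul_self_of_ae_le [IsFiniteMeasure μ] (hg : AEStronglyMeasurable g μ)
    {C : ℝ} (hgC : ∀ᵐ x ∂μ, g x ≤ C) :
    Integrable (fun x => exp (g x) * g x) μ :=
  (integrable_const (exp (-1) + exp C * |C|)).mono' (by fun_prop)
    (hgC.mono fun _ hx => abs_exp_mul_le_of_le hx)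

lemma aestronglyMeasurable_of_integrable_exp (hh : Integrable (fun x => exp (h x)) μ) :
    AEStronglyMeasurable h μ :=
  (aemeasurable_of_aemeasurable_exp hh.aemeasurable).aestronglyMeasurable

lemma integrable_exp_min_nat [IsFiniteMeasure μ] (hh : Integrable (fun x => exp (h x)) μ)
    (n : ℕ) : Integrable (fun x => exp (min (h x) n)) μ :=
  hh.mono' (by have := aestronglyMeasurable_of_integrable_exp hh; fun_prop)
    (ae_of_all _ fun x => by simp [abs_of_pos (exp_pos _)])

lemma integrable_exp_min_nat_mul [IsFiniteMeasure μ] (hh : Integrable (fun x => exp (h x)) μ)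
    (n : ℕ) : Integrable (fun x => exp (min (h x) n) * h x) μ :=
  ((integrable_const (exp (-1) + exp n * n)).add (hh.const_mul (exp n))).mono'
    (by have := aestronglyMeasurable_of_integrable_exp hh; fun_prop)
    (ae_of_all _ fun x => abs_exp_min_mul_le n.cast_nonneg (h x))

lemma integrable_exp_min_nat_mul_self [IsFiniteMeasure μ]
    (hh : Integrable (fun x => exp (h x)) μ) (n : ℕ) :
    Integrable (fun x => exp (min (h x) n) * min (h x) n) μ :=
  integrable_exp_mul_self_of_ae_le
    (by have := aestronglyMeasurable_of_integrable_exp hh; fun_prop)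
    (ae_of_all _ fun x => min_le_right (h x) n)

lemma tendsto_integral_exp_min_nat (hh : Integrable (fun x => exp (h x)) μ) :
    Filter.Tendsto (fun n : ℕ => ∫ x, exp (min (h x) n) ∂μ) Filter.atTop
      (nhds (∫ x, exp (h x) ∂μ)) := by
  have := aestronglyMeasurable_of_integrable_exp hh
  refine tendsto_integral_of_dominated_convergence _ (fun n => by fun_prop) hh
    (fun n => ae_of_all _ fun x => by simp [abs_of_pos (exp_pos _)])
    (ae_of_all _ fun x => tendsto_const_nhds.congr' ?_)
  filter_upwards [Filter.eventually_ge_atTop ⌈h x⌉₊] with n hn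
  rw [min_eq_left ((Nat.le_ceil _).trans (Nat.cast_le.2 hn))]

end Integrability

section Gibbs

variable {Θ : Type*} [MeasurableSpace Θ] {π : Measure Θ} {g h : Θ → ℝ}

lemma integral_sub_klM_le_log_integral_exp [IsProbabilityMeasure π] {ρ : Measure Θ}
    [IsProbabilityMeasure ρ] (hρπ : ρ ≪ π) (hllr : Integrable (llr ρ π) ρ) (hh : Integrable h ρ)
    (hexp : Integrable (fun x => exp (h x)) π) :
    (∫ x, h x ∂ρ) - klM ρ π ≤ log (∫ x, exp (h x) ∂π) := by
  have := isProbabilityMeasure_tilted hexp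
  have hgibbs := InformationTheory.integral_llr_add_sub_measure_univ_nonneg
    (hρπ.trans (absolutelyContinuous_tilted hexp)) (integrable_llr_tilted_right hρπ hh hllr hexp)
  rw [integral_llr_tilted_right hρπ hh hexp hllr] at hgibbs
  simp only [probReal_univ, add_sub_cancel_right] at hgibbs
  rw [klM]
  linarith

lemma llr_tilted_self_ae_eq [SigmaFinite π] (hg : Integrable (fun x => exp (g x)) π) :
    llr (π.tilted g) π =ᵐ[π.tilted g] fun x => g x - log (∫ x, exp (g x) ∂π) :=
  (tilted_absolutelyContinuous π g).ae_le (log_rnDeriv_tilted_left_self hg)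

lemma integrable_llr_tilted_self [IsFiniteMeasure π] (hg : Integrable (fun x => exp (g x)) π)
    (hgg : Integrable (fun x => exp (g x) * g x) π) :
    Integrable (llr (π.tilted g) π) (π.tilted g) :=
  (((integrable_tilted_iff hg g).2 hgg).sub (integrable_const _)).congr
    (llr_tilted_self_ae_eq hg).symm

lemma integral_sub_klM_tilted [IsProbabilityMeasure π] (hg : Integrable (fun x => exp (g x)) π)
    (hgg : Integrable (fun x => exp (g x) * g x) π)
    (hhg : Integrable (fun x => exp (g x) * h x) π) :
    (∫ x, h x ∂π.tilted g) - klM (π.tilted g) π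
      = (∫ x, (h x - g x) ∂π.tilted g) + log (∫ x, exp (g x) ∂π) := by
  have := isProbabilityMeasure_tilted hg
  have hg' : Integrable g (π.tilted g) := (integrable_tilted_iff hg g).2 hgg
  have hh' : Integrable h (π.tilted g) := (integrable_tilted_iff hg h).2 hhg
  rw [klM, integral_congr_ae (llr_tilted_self_ae_eq hg), integral_sub hg' (integrable_const _),
    integral_sub hh' hg', integral_const, probReal_univ, one_smul]
  ring

lemma integral_sub_klM_tilted_self [IsProbabilityMeasure π]
    (hh : Integrable (fun x => exp (h x)) π) {C : ℝ} (hhC : ∀ᵐ x ∂π, h x ≤ C) :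
    (∫ x, h x ∂π.tilted h) - klM (π.tilted h) π = log (∫ x, exp (h x) ∂π) := by
  have hhh := integrable_exp_mul_self_of_ae_le (aestronglyMeasurable_of_integrable_exp hh) hhC
  simp [integral_sub_klM_tilted hh hhh hhh]

end Gibbs

def dvObjectiveValues {Θ : Type*} [MeasurableSpace Θ] (π : Measure Θ) (h : Θ → ℝ) : Set ℝ :=
  {x : ℝ | ∃ ρ : Measure Θ, IsProbabilityMeasure ρ ∧ ρ ≪ π ∧
    Integrable (llr ρ π) ρ ∧ Integrable h ρ ∧ x = (∫ θ, h θ ∂ρ) - klM ρ π}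

section Variational

variable {Θ : Type*} [MeasurableSpace Θ] {π : Measure Θ} [IsProbabilityMeasure π] {h : Θ → ℝ}

lemma le_log_integral_exp_of_mem_dvObjectiveValues (hh : Integrable (fun x => exp (h x)) π)
    {x : ℝ} (hx : x ∈ dvObjectiveValues π h) : x ≤ log (∫ x, exp (h x) ∂π) := by
  obtain ⟨ρ, _, hρπ, hllr, hhρ, rfl⟩ := hx
  exact integral_sub_klM_le_log_integral_exp hρπ hllr hhρ hh

lemma integral_sub_klM_tilted_min_nat_mem_dvObjectiveValues
    (hh : Integrable (fun x => exp (h x)) π) (n : ℕ) :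
    (∫ x, h x ∂π.tilted fun x => min (h x) n) - klM (π.tilted fun x => min (h x) n) π
      ∈ dvObjectiveValues π h :=
  have hg := integrable_exp_min_nat hh n
  ⟨_, isProbabilityMeasure_tilted hg, tilted_absolutelyContinuous _ _,
    integrable_llr_tilted_self hg (integrable_exp_min_nat_mul_self hh n),
    (integrable_tilted_iff hg h).2 (integrable_exp_min_nat_mul hh n), rfl⟩

lemma log_integral_exp_min_nat_le_integral_sub_klM_tilted
    (hh : Integrable (fun x => exp (h x)) π) (n : ℕ) :
    log (∫ x, exp (min (h x) n) ∂π)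
      ≤ (∫ x, h x ∂π.tilted fun x => min (h x) n) - klM (π.tilted fun x => min (h x) n) π := by
  rw [integral_sub_klM_tilted (integrable_exp_min_nat hh n) (integrable_exp_min_nat_mul_self hh n)
    (integrable_exp_min_nat_mul hh n)]
  exact le_add_of_nonneg_left (integral_nonneg fun x => sub_nonneg.2 (min_le_left _ _))

lemma log_integral_exp_eq_sSup_dvObjectiveValues (hh : Integrable (fun x => exp (h x)) π) :
    log (∫ x, exp (h x) ∂π) = sSup (dvObjectiveValues π h) := by
  have hbdd : BddAbove (dvObjectiveValues π h) :=
    ⟨_, fun _ => le_log_integral_exp_of_mem_dvObjectiveValues hh⟩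
  have hlog_tendsto := ((Real.continuousAt_log (integral_exp_pos hh).ne').tendsto).comp
    (tendsto_integral_exp_min_nat hh)
  refine le_antisymm (le_of_tendsto' hlog_tendsto fun n => ?_)
    (csSup_le ⟨_, integral_sub_klM_tilted_min_nat_mem_dvObjectiveValues hh 0⟩
      fun _ => le_log_integral_exp_of_mem_dvObjectiveValues hh)
  exact (log_integral_exp_min_nat_le_integral_sub_klM_tilted hh n).trans
    (le_csSup hbdd (integral_sub_klM_tilted_min_nat_mem_dvObjectiveValues hh n))

end Variational

theorem donsker_varadhan_general {Θ : Type*} [MeasurableSpace Θ]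
    (π : Measure Θ) [IsProbabilityMeasure π] (h : Θ → ℝ)
    (hint : Integrable (fun θ => Real.exp (h θ)) π) :
    Real.log (∫ θ, Real.exp (h θ) ∂π)
      = sSup {x : ℝ | ∃ ρ : Measure Θ, IsProbabilityMeasure ρ ∧ ρ ≪ π ∧
          Integrable (MeasureTheory.llr ρ π) ρ ∧ Integrable h ρ ∧
          x = (∫ θ, h θ ∂ρ) - klM ρ π} ∧
    ∀ C : ℝ, (∀ᵐ θ ∂π, h θ ≤ C) →
      (∫ θ, h θ ∂(π.withDensity fun θ =>
            ENNReal.ofReal (Real.exp (h θ) / ∫ θ', Real.exp (h θ') ∂π)))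
        - klM (π.withDensity fun θ =>
            ENNReal.ofReal (Real.exp (h θ) / ∫ θ', Real.exp (h θ') ∂π)) π
      = Real.log (∫ θ, Real.exp (h θ) ∂π) :=
  ⟨log_integral_exp_eq_sSup_dvObjectiveValues hint,
    fun _ hC => integral_sub_klM_tilted_self hint hC⟩

/-- Donsker–Varadhan variational formula:
`log ∫ e^h dπ = sup_ρ [∫ h dρ − KL(ρ‖π)]`, the supremum being over probability
measures `ρ ≪ π` for which both terms are finite; moreover when `h` is bounded
above on the support of `π`, the supremum is attained at the Gibbs measure
`π_h(dθ) = e^{h(θ)} π(dθ) / ∫ e^h dπ`. -/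
theorem donsker_varadhan {Θ : Type*} [MeasurableSpace Θ]
    (π : Measure Θ) [IsProbabilityMeasure π] (h : Θ → ℝ) (hmeas : Measurable h)
    (hint : Integrable (fun θ => Real.exp (h θ)) π) :
    Real.log (∫ θ, Real.exp (h θ) ∂π)
      = sSup {x : ℝ | ∃ ρ : Measure Θ, IsProbabilityMeasure ρ ∧ ρ ≪ π ∧
          Integrable (MeasureTheory.llr ρ π) ρ ∧ Integrable h ρ ∧
          x = (∫ θ, h θ ∂ρ) - klM ρ π} ∧
    ∀ C : ℝ, (∀ᵐ θ ∂π, h θ ≤ C) →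
      (∫ θ, h θ ∂(π.withDensity fun θ =>
            ENNReal.ofReal (Real.exp (h θ) / ∫ θ', Real.exp (h θ') ∂π)))
        - klM (π.withDensity fun θ =>
            ENNReal.ofReal (Real.exp (h θ) / ∫ θ', Real.exp (h θ') ∂π)) π
      = Real.log (∫ θ, Real.exp (h θ) ∂π) :=
  donsker_varadhan_general π h hint
end

section
/- In the Gaussian model P_θ = N(θ, v²I_d) with isotropic Gaussian prior π = N(0, σ²I_d), for all β ≥ 0: β E_{π_{−β}}[KL(P_{θ₀}‖P_θ)] = (β/v²)‖θ₀‖² / (2σ⁴((β/v²) + 1/σ²)²) + (β/v²)d / (2((β/v²) + 1/σ²)) ≤ d/2 + ‖θ₀‖²/(8σ²). -/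
/-!
With `a = β / v²` and `τ = (a + σ⁻²)⁻¹`, completing the square shows that `e^{-βK}` times the
prior density is a constant multiple of `∏ᵢ N(τ a θ₀ᵢ, τ)`, so the tempered posterior is this
product of Gaussians. Hence `E[K] = (d τ + ∑ᵢ (τ a θ₀ᵢ - θ₀ᵢ)²) / (2v²)`, and the bound follows
from `a τ ≤ 1` and `4 a σ⁻² τ² ≤ 1` (AM-GM).
-/

open MeasureTheory ProbabilityTheory Real
open scoped NNReal

theorem MeasureTheory.Measure.withDensity_ofReal_prod_eq_pi {ι : Type*} [Fintype ι]
    {X : ι → Type*} [∀ i, MeasurableSpace (X i)] {μ : (i : ι) → Measure (X i)}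
    [∀ i, SigmaFinite (μ i)] {g : (i : ι) → X i → ℝ}
    (hg : ∀ i, Integrable (g i) (μ i)) (hg0 : ∀ i, 0 ≤ g i) :
    (Measure.pi μ).withDensity (fun x ↦ ENNReal.ofReal (∏ i, g i (x i)))
      = Measure.pi fun i ↦ (μ i).withDensity fun y ↦ ENNReal.ofReal (g i y) := by
  have := fun i ↦ isFiniteMeasure_withDensity_ofReal (hg i).2
  refine (Measure.pi_eq fun s hs ↦ ?_).symm
  have hint : ∀ i, Integrable (g i) ((μ i).restrict (s i)) := fun i ↦ (hg i).restrict
  rw [withDensity_apply _ (MeasurableSet.univ_pi hs), Measure.restrict_pi_pi,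
    ← ofReal_integral_eq_lintegral_ofReal (Integrable.fintype_prod_dep hint)
      (Filter.Eventually.of_forall fun x ↦ Finset.prod_nonneg fun i _ ↦ hg0 i (x i)),
    integral_fintype_prod_eq_prod, ENNReal.ofReal_prod_of_nonneg
      fun i _ ↦ integral_nonneg (hg0 i)]
  refine Finset.prod_congr rfl fun i _ ↦ ?_
  rw [withDensity_apply _ (hs i),
    ofReal_integral_eq_lintegral_ofReal (hint i) (Filter.Eventually.of_forall (hg0 i))]

theorem MeasureTheory.withDensity_ofReal_div_integral_eq_of_eq_smul {α : Type*}
    [MeasurableSpace α] {μ ν : Measure α} [IsProbabilityMeasure ν] {f : α → ℝ}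
    (hf : AEStronglyMeasurable f μ) (hf0 : 0 ≤ f) {k : ℝ} (hk : 0 < k)
    (h : μ.withDensity (fun x ↦ ENNReal.ofReal (f x)) = ENNReal.ofReal k • ν) :
    μ.withDensity (fun x ↦ ENNReal.ofReal (f x / ∫ y, f y ∂μ)) = ν := by
  have hint : ∫ y, f y ∂μ = k := by
    rw [integral_eq_lintegral_of_nonneg_ae (.of_forall hf0) hf, ← setLIntegral_univ,
      ← withDensity_apply _ MeasurableSet.univ, h]
    simp [hk.le]
  have hdiv : (fun x ↦ ENNReal.ofReal (f x / k))
      = ENNReal.ofReal k⁻¹ • fun x ↦ ENNReal.ofReal (f x) := by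
    ext x
    simp [div_eq_inv_mul, ENNReal.ofReal_mul (inv_nonneg.2 hk.le)]
  rw [hint, hdiv, withDensity_smul' _ _ ENNReal.ofReal_ne_top, h, smul_smul,
    ← ENNReal.ofReal_mul (inv_nonneg.2 hk.le), inv_mul_cancel₀ hk.ne', ENNReal.ofReal_one,
    one_smul]

theorem MeasureTheory.integral_sum_comp_eval {ι : Type*} [Fintype ι] {X : ι → Type*}
    [∀ i, MeasurableSpace (X i)] {μ : (i : ι) → Measure (X i)} [∀ i, IsProbabilityMeasure (μ i)]
    {f : (i : ι) → X i → ℝ} (hf : ∀ i, Integrable (f i) (μ i)) :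
    ∫ x, ∑ i, f i (x i) ∂Measure.pi μ = ∑ i, ∫ y, f i y ∂μ i := by
  rw [integral_finsetSum _ fun i _ ↦ integrable_comp_eval (hf i)]
  exact Finset.sum_congr rfl fun i _ ↦ integral_comp_eval (hf i).1

theorem ProbabilityTheory.volume_withDensity_prod_gaussianPDFReal {ι : Type*} [Fintype ι]
    (m : ι → ℝ) {v : ℝ≥0} (hv : v ≠ 0) :
    volume.withDensity (fun x : ι → ℝ ↦ ENNReal.ofReal (∏ i, gaussianPDFReal (m i) v (x i)))
      = Measure.pi fun i ↦ gaussianReal (m i) v := by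
  rw [volume_pi, Measure.withDensity_ofReal_prod_eq_pi (fun i ↦ integrable_gaussianPDFReal _ _)
    (fun i ↦ gaussianPDFReal_nonneg _ _)]
  simp_rw [gaussianReal_of_var_ne_zero _ hv]
  rfl

theorem ProbabilityTheory.integral_sub_sq_gaussianReal (m t : ℝ) (v : ℝ≥0) :
    ∫ x, (x - t) ^ 2 ∂gaussianReal m v = v + (m - t) ^ 2 := by
  have hvar := variance_eq_sub (memLp_id_gaussianReal' (μ := m - t) (v := v) 2 (by simp))
  simp only [variance_id_gaussianReal, id_eq, Pi.pow_apply, integral_id_gaussianReal] at hvar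
  rw [← integral_map (f := fun x ↦ x ^ 2) (by fun_prop) (by fun_prop),
    gaussianReal_map_sub_const]
  linarith

theorem ProbabilityTheory.integral_sum_sub_sq_pi_gaussianReal {ι : Type*} [Fintype ι]
    (m t : ι → ℝ) (v : ℝ≥0) :
    ∫ x, ∑ i, (x i - t i) ^ 2 ∂Measure.pi (fun i ↦ gaussianReal (m i) v)
      = Fintype.card ι * v + ∑ i, (m i - t i) ^ 2 := by
  have hint : ∀ i, Integrable (fun x ↦ (x - t i) ^ 2) (gaussianReal (m i) v) := fun i ↦
    ((memLp_id_gaussianReal 2).sub (memLp_const (t i))).integrable_sq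
  rw [integral_sum_comp_eval hint]
  simp [integral_sub_sq_gaussianReal, Finset.sum_add_distrib]

theorem neg_sq_add_neg_sq_eq_of_mul_add_eq_one {a b τ : ℝ} (hτ : τ * (a + b) = 1) (t x : ℝ) :
    -(a / 2) * (x - t) ^ 2 + -(b / 2) * x ^ 2
      = -(τ * a * b / 2) * t ^ 2 + -(x - τ * a * t) ^ 2 / (2 * τ) := by
  have hτ0 : τ ≠ 0 := left_ne_zero_of_mul_eq_one hτ
  field_simp
  linear_combination (a * t ^ 2 * τ - x ^ 2) * hτ

theorem ProbabilityTheory.exp_mul_exp_eq_prod_gaussianPDFReal {ι : Type*} [Fintype ι]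
    {a b : ℝ} {τ : ℝ≥0} (hτ : τ * (a + b) = 1) (t x : ι → ℝ) :
    rexp (-(a / 2) * ∑ i, (x i - t i) ^ 2) * rexp (-(b / 2) * ∑ i, x i ^ 2)
      = rexp (-(τ * a * b / 2) * ∑ i, t i ^ 2) * √(2 * π * τ) ^ Fintype.card ι
        * ∏ i, gaussianPDFReal (τ * a * t i) τ (x i) := by
  have hτ0 : (0 : ℝ) < τ := τ.2.lt_of_ne' (left_ne_zero_of_mul_eq_one hτ)
  simp only [gaussianPDFReal, Finset.prod_mul_distrib, Finset.prod_const, Finset.card_univ,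
    ← Real.exp_sum, ← Real.exp_add, Finset.mul_sum, ← Finset.sum_add_distrib,
    neg_sq_add_neg_sq_eq_of_mul_add_eq_one hτ]
  rw [Finset.sum_add_distrib, Real.exp_add, inv_pow]
  field_simp

theorem gaussian_posterior_eq_pi {d : ℕ} {v σ β c : ℝ} (hc : 0 < c) (θ₀ : Fin d → ℝ) {τ : ℝ≥0}
    (hτ : τ * (β / v ^ 2 + 1 / σ ^ 2) = 1) :
    let prior := volume.withDensity fun θ : Fin d → ℝ ↦
      ENNReal.ofReal (c * rexp (-(∑ i, θ i ^ 2) / (2 * σ ^ 2)))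
    let likelihood := fun θ : Fin d → ℝ ↦ rexp (-β * ((∑ i, (θ i - θ₀ i) ^ 2) / (2 * v ^ 2)))
    prior.withDensity (fun θ ↦ ENNReal.ofReal (likelihood θ / ∫ θ', likelihood θ' ∂prior))
      = Measure.pi fun i ↦ gaussianReal (τ * (β / v ^ 2) * θ₀ i) τ := by
  intro prior likelihood
  have hτ0 : (0 : ℝ) < τ := τ.2.lt_of_ne' (left_ne_zero_of_mul_eq_one hτ)
  set k := c * rexp (-(τ * (β / v ^ 2) * (1 / σ ^ 2) / 2) * ∑ i, θ₀ i ^ 2)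
    * √(2 * π * τ) ^ d with hk_def
  have hk : 0 < k := by positivity
  have hdensity : ∀ θ, c * rexp (-(∑ i, θ i ^ 2) / (2 * σ ^ 2)) * likelihood θ
      = k * ∏ i, gaussianPDFReal (τ * (β / v ^ 2) * θ₀ i) τ (θ i) := by
    intro θ
    have hsquare := exp_mul_exp_eq_prod_gaussianPDFReal hτ θ₀ θ
    rw [Fintype.card_fin] at hsquare
    have hlik : -β * ((∑ i, (θ i - θ₀ i) ^ 2) / (2 * v ^ 2))
        = -(β / v ^ 2 / 2) * ∑ i, (θ i - θ₀ i) ^ 2 := by ring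
    have hprior : -(∑ i, θ i ^ 2) / (2 * σ ^ 2) = -(1 / σ ^ 2 / 2) * ∑ i, θ i ^ 2 := by ring
    simp only [likelihood, hlik, hprior, hk_def, mul_assoc c, ← hsquare]
    ring
  refine withDensity_ofReal_div_integral_eq_of_eq_smul (by fun_prop)
    (fun θ ↦ (Real.exp_pos _).le) hk ?_
  have hproduct : ((fun θ ↦ ENNReal.ofReal (c * rexp (-(∑ i, θ i ^ 2) / (2 * σ ^ 2))))
        * fun θ ↦ ENNReal.ofReal (likelihood θ))
      = ENNReal.ofReal k
        • fun θ ↦ ENNReal.ofReal (∏ i, gaussianPDFReal (τ * (β / v ^ 2) * θ₀ i) τ (θ i)) := by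
    ext θ
    rw [Pi.mul_apply, ← ENNReal.ofReal_mul (by positivity), hdensity, Pi.smul_apply, smul_eq_mul,
      ENNReal.ofReal_mul hk.le]
  rw [← withDensity_mul _ (by fun_prop) (by fun_prop), hproduct,
    withDensity_smul' _ _ ENNReal.ofReal_ne_top,
    volume_withDensity_prod_gaussianPDFReal _ (NNReal.coe_pos.1 hτ0).ne']

theorem gaussian_localized_risk_eq {ι : Type*} [Fintype ι] {a σ τ : ℝ} (hσ : σ ≠ 0)
    (hτ : τ * (a + 1 / σ ^ 2) = 1) (θ₀ : ι → ℝ) :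
    a / 2 * (Fintype.card ι * τ + ∑ i, (τ * a * θ₀ i - θ₀ i) ^ 2)
      = a * (∑ i, θ₀ i ^ 2) / (2 * σ ^ 4 * (a + 1 / σ ^ 2) ^ 2)
        + a * Fintype.card ι / (2 * (a + 1 / σ ^ 2)) := by
  have hshift : ∑ i, (τ * a * θ₀ i - θ₀ i) ^ 2 = (τ * a - 1) ^ 2 * ∑ i, θ₀ i ^ 2 := by
    rw [Finset.mul_sum]
    exact Finset.sum_congr rfl fun i _ ↦ by ring
  have hs : a * σ ^ 2 + 1 ≠ 0 := by
    rw [show a * σ ^ 2 + 1 = σ ^ 2 * (a + 1 / σ ^ 2) by field_simp]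
    exact mul_ne_zero (pow_ne_zero 2 hσ) (right_ne_zero_of_mul_eq_one hτ)
  rw [hshift, eq_inv_of_mul_eq_one_left hτ]
  field_simp
  ring

theorem gaussian_localized_risk_le {a σ S n : ℝ} (ha : 0 ≤ a) (hσ : σ ≠ 0) (hS : 0 ≤ S)
    (hn : 0 ≤ n) :
    a * S / (2 * σ ^ 4 * (a + 1 / σ ^ 2) ^ 2) + a * n / (2 * (a + 1 / σ ^ 2))
      ≤ n / 2 + S / (8 * σ ^ 2) := by
  have hσ2 : 0 < σ ^ 2 := by positivity
  have hfirst : a * S / (2 * σ ^ 4 * (a + 1 / σ ^ 2) ^ 2)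
      = a * S / (2 * (a * σ ^ 2 + 1) ^ 2) := by
    field_simp
  have hsecond : a * n / (2 * (a + 1 / σ ^ 2)) = a * σ ^ 2 * n / (2 * (a * σ ^ 2 + 1)) := by
    field_simp
  rw [hfirst, hsecond, add_comm (n / 2)]
  refine add_le_add ?_ ?_
  · rw [div_le_div_iff₀ (by positivity) (by positivity)]
    nlinarith [mul_nonneg hS (sq_nonneg (a * σ ^ 2 - 1))]
  · rw [div_le_div_iff₀ (by positivity) (by positivity)]
    nlinarith [mul_nonneg hn (mul_nonneg ha hσ2.le)]

theorem gaussian_isotropic_localized_bound_general {d : ℕ} (v σ : ℝ) (hσ : 0 < σ)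
    (β : ℝ) (hβ : 0 ≤ β) (θ₀ : Fin d → ℝ)
    (K : (Fin d → ℝ) → ℝ)
    (hKdef : ∀ θ, K θ = (∑ i, (θ i - θ₀ i) ^ 2) / (2 * v ^ 2))
    (pr : Measure (Fin d → ℝ))
    (hpr : pr = volume.withDensity fun θ => ENNReal.ofReal
      ((2 * Real.pi * σ ^ 2) ^ (-(d : ℝ) / 2) * Real.exp (-(∑ i, (θ i) ^ 2) / (2 * σ ^ 2))))
    (Z : ℝ) (hZ : Z = ∫ θ, Real.exp (-β * K θ) ∂pr)
    (prβ : Measure (Fin d → ℝ))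
    (hprβ : prβ = pr.withDensity fun θ => ENNReal.ofReal (Real.exp (-β * K θ) / Z)) :
    β * (∫ θ, K θ ∂prβ)
        = (β / v ^ 2) * (∑ i, (θ₀ i) ^ 2) / (2 * σ ^ 4 * ((β / v ^ 2) + 1 / σ ^ 2) ^ 2)
          + (β / v ^ 2) * d / (2 * ((β / v ^ 2) + 1 / σ ^ 2)) ∧
    β * (∫ θ, K θ ∂prβ) ≤ d / 2 + (∑ i, (θ₀ i) ^ 2) / (8 * σ ^ 2) := by
  obtain rfl : K = _ := funext hKdef
  subst hpr hZ hprβ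
  have hs : 0 < β / v ^ 2 + 1 / σ ^ 2 := by positivity
  set τ : ℝ≥0 := ⟨(β / v ^ 2 + 1 / σ ^ 2)⁻¹, by positivity⟩
  have hτ : (τ : ℝ) * (β / v ^ 2 + 1 / σ ^ 2) = 1 := inv_mul_cancel₀ hs.ne'
  rw [gaussian_posterior_eq_pi (by positivity) θ₀ hτ, integral_div,
    integral_sum_sub_sq_pi_gaussianReal, show ∀ y, β * (y / (2 * v ^ 2)) = β / v ^ 2 / 2 * y
      by intro y; ring, gaussian_localized_risk_eq hσ.ne' hτ, Fintype.card_fin]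
  exact ⟨rfl, gaussian_localized_risk_le (by positivity) hσ.ne' (by positivity) (by positivity)⟩

/-- Isotropic Gaussian case: model `P_θ = N(θ, v²I_d)`, prior `π = N(0, σ²I_d)`.
For all `β ≥ 0`,
`β E_{π_{−β}}[KL(P_{θ₀}‖P_θ)] = (β/v²)‖θ₀‖²/(2σ⁴((β/v²)+1/σ²)²) + (β/v²)d/(2((β/v²)+1/σ²))`
and this is at most `d/2 + ‖θ₀‖²/(8σ²)`. -/
theorem gaussian_isotropic_localized_bound {d : ℕ} (v σ : ℝ) (hv : 0 < v) (hσ : 0 < σ)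
    (β : ℝ) (hβ : 0 ≤ β) (θ₀ : Fin d → ℝ)
    (K : (Fin d → ℝ) → ℝ)
    (hKdef : ∀ θ, K θ = (∑ i, (θ i - θ₀ i) ^ 2) / (2 * v ^ 2))
    (pr : Measure (Fin d → ℝ))
    (hpr : pr = volume.withDensity fun θ => ENNReal.ofReal
      ((2 * Real.pi * σ ^ 2) ^ (-(d : ℝ) / 2) * Real.exp (-(∑ i, (θ i) ^ 2) / (2 * σ ^ 2))))
    (Z : ℝ) (hZ : Z = ∫ θ, Real.exp (-β * K θ) ∂pr) (hZpos : 0 < Z)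
    (prβ : Measure (Fin d → ℝ))
    (hprβ : prβ = pr.withDensity fun θ => ENNReal.ofReal (Real.exp (-β * K θ) / Z)) :
    β * (∫ θ, K θ ∂prβ)
        = (β / v ^ 2) * (∑ i, (θ₀ i) ^ 2) / (2 * σ ^ 4 * ((β / v ^ 2) + 1 / σ ^ 2) ^ 2)
          + (β / v ^ 2) * d / (2 * ((β / v ^ 2) + 1 / σ ^ 2)) ∧
    β * (∫ θ, K θ ∂prβ) ≤ d / 2 + (∑ i, (θ₀ i) ^ 2) / (8 * σ ^ 2) :=
  gaussian_isotropic_localized_bound_general v σ hσ β hβ θ₀ K hKdef pr hpr Z hZ prβ hprβ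
end
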